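/- arXiv:1504.06398 — 3 statements merged into one kernel-verified Lean document; each statement's English description precedes it below -/
import Mathlib

section
/- Let δ = 0.01, γ > 0, and real numbers x₁,…,xₙ with γ|xᵢ| ≤ δ for all i. Set Sₙ = Σᵢ xᵢ, Aₙ² = Σᵢ xᵢ², and c̄ₙ = maxᵢ |xᵢ|. Then exp(-γ³Aₙ²c̄ₙ)·exp(γSₙ - γ²Aₙ²/2) ≤ ∏ᵢ(1+γxᵢ) ≤ exp(γ³Aₙ²c̄ₙ)·exp(γSₙ - γ²Aₙ²/2). -/
lemma key_log_bound (u : ℝ) (hu : |u| ≤ 0.01) :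
    |Real.log (1 + u) - (u - u ^ 2 / 2)| ≤ |u| ^ 3 := by
  have h1 : |u| < 1 := lt_of_le_of_lt hu (by norm_num)
  have h2 := Real.abs_log_sub_add_sum_range_le (x := -u) (by rwa [abs_neg]) 3
  rw [abs_neg] at h2
  have hsum : (∑ i ∈ Finset.range 3, (-u) ^ (i + 1) / (i + 1)) = -u + u ^ 2 / 2 - u ^ 3 / 3 := by
    simp [Finset.sum_range_succ]
    ring
  rw [hsum] at h2
  have heq : Real.log (1 + u) - (u - u ^ 2 / 2) =
      ((-u + u ^ 2 / 2 - u ^ 3 / 3) + Real.log (1 - (-u))) + u ^ 3 / 3 := by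
    ring_nf
  rw [heq]
  have h3 : |u ^ 3 / 3| ≤ |u| ^ 3 / 3 := by
    rw [abs_div, abs_pow]; norm_num
  have h4 : |u| ^ 4 / (1 - |u|) ≤ |u| ^ 3 / 3 := by
    rw [div_le_iff₀ (by linarith)]
    nlinarith [pow_nonneg (abs_nonneg u) 3, abs_nonneg u]
  calc |((-u + u ^ 2 / 2 - u ^ 3 / 3) + Real.log (1 - (-u))) + u ^ 3 / 3|
      ≤ |(-u + u ^ 2 / 2 - u ^ 3 / 3) + Real.log (1 - (-u))| + |u ^ 3 / 3| := abs_add_le _ _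
    _ ≤ |u| ^ 4 / (1 - |u|) + |u| ^ 3 / 3 := add_le_add h2 h3
    _ ≤ |u| ^ 3 := by nlinarith [pow_nonneg (abs_nonneg u) 3]

theorem capital_process_bounds (n : ℕ) (γ : ℝ) (hγ : 0 < γ) (x : ℕ → ℝ)
    (hx : ∀ i ∈ Finset.Icc 1 n, γ * |x i| ≤ 0.01)
    (cbar : ℝ)
    (hub : ∀ i ∈ Finset.Icc 1 n, |x i| ≤ cbar)
    (hmem : ∃ i ∈ Finset.Icc 1 n, cbar = |x i|) :
    Real.exp (-(γ ^ 3 * (∑ i ∈ Finset.Icc 1 n, x i ^ 2) * cbar)) *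
        Real.exp (γ * (∑ i ∈ Finset.Icc 1 n, x i) -
          γ ^ 2 * (∑ i ∈ Finset.Icc 1 n, x i ^ 2) / 2) ≤
      ∏ i ∈ Finset.Icc 1 n, (1 + γ * x i) ∧
    ∏ i ∈ Finset.Icc 1 n, (1 + γ * x i) ≤
      Real.exp (γ ^ 3 * (∑ i ∈ Finset.Icc 1 n, x i ^ 2) * cbar) *
        Real.exp (γ * (∑ i ∈ Finset.Icc 1 n, x i) -
          γ ^ 2 * (∑ i ∈ Finset.Icc 1 n, x i ^ 2) / 2) := by
  set T := Finset.Icc 1 n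
  have habs : ∀ i ∈ T, |γ * x i| ≤ 0.01 := by
    intro i hi
    rw [abs_mul, abs_of_pos hγ]
    exact hx i hi
  have hpos : ∀ i ∈ T, 0 < 1 + γ * x i := by
    intro i hi
    have := abs_le.mp (habs i hi)
    linarith [this.1]
  have hterm : ∀ i ∈ T,
      |Real.log (1 + γ * x i) - (γ * x i - γ ^ 2 * x i ^ 2 / 2)| ≤ γ ^ 3 * x i ^ 2 * cbar := by
    intro i hi
    have h1 := key_log_bound (γ * x i) (habs i hi)
    have h2 : (γ * x i) ^ 2 = γ ^ 2 * x i ^ 2 := by ring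
    rw [h2] at h1
    refine h1.trans ?_
    have h3 : |γ * x i| ^ 3 = γ ^ 3 * x i ^ 2 * |x i| := by
      rw [abs_mul, abs_of_pos hγ, mul_pow, ← sq_abs (x i)]
      ring
    rw [h3]
    exact mul_le_mul_of_nonneg_left (hub i hi)
      (by positivity)
  have hprod : ∏ i ∈ T, (1 + γ * x i) = Real.exp (∑ i ∈ T, Real.log (1 + γ * x i)) := by
    rw [Real.exp_sum]
    exact Finset.prod_congr rfl fun i hi => (Real.exp_log (hpos i hi)).symm
  have hsum_lo : ∑ i ∈ T, (γ * x i - γ ^ 2 * x i ^ 2 / 2 - γ ^ 3 * x i ^ 2 * cbar) ≤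
      ∑ i ∈ T, Real.log (1 + γ * x i) := by
    refine Finset.sum_le_sum fun i hi => ?_
    have := abs_le.mp (hterm i hi)
    linarith [this.1]
  have hsum_hi : ∑ i ∈ T, Real.log (1 + γ * x i) ≤
      ∑ i ∈ T, (γ * x i - γ ^ 2 * x i ^ 2 / 2 + γ ^ 3 * x i ^ 2 * cbar) := by
    refine Finset.sum_le_sum fun i hi => ?_
    have := abs_le.mp (hterm i hi)
    linarith [this.2]
  have hlo : ∑ i ∈ T, (γ * x i - γ ^ 2 * x i ^ 2 / 2 - γ ^ 3 * x i ^ 2 * cbar) =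
      -(γ ^ 3 * (∑ i ∈ T, x i ^ 2) * cbar) +
        (γ * (∑ i ∈ T, x i) - γ ^ 2 * (∑ i ∈ T, x i ^ 2) / 2) := by
    simp only [Finset.sum_sub_distrib, ← Finset.mul_sum, ← Finset.sum_div, ← Finset.sum_mul]
    ring
  have hhi : ∑ i ∈ T, (γ * x i - γ ^ 2 * x i ^ 2 / 2 + γ ^ 3 * x i ^ 2 * cbar) =
      γ ^ 3 * (∑ i ∈ T, x i ^ 2) * cbar +
        (γ * (∑ i ∈ T, x i) - γ ^ 2 * (∑ i ∈ T, x i ^ 2) / 2) := by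
    simp only [Finset.sum_add_distrib, Finset.sum_sub_distrib, ← Finset.mul_sum,
      ← Finset.sum_div, ← Finset.sum_mul]
    ring
  constructor
  · rw [hprod, ← Real.exp_add]
    exact Real.exp_le_exp.mpr (hlo ▸ hsum_lo)
  · rw [hprod, ← Real.exp_add]
    exact Real.exp_le_exp.mpr (hhi ▸ hsum_hi)
end

section
/- For ψ_L(n) = √(2 ln ln n + 3 ln ln ln n), the integral ∫_{λ₀}^∞ ψ_L(λ)e^{-ψ_L(λ)²/2} dλ/λ diverges (where λ₀ is large enough that all iterated logarithms are positive). -/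
open Real Filter Asymptotics

/-! With `L = log log λ` we have `ψ_L(λ)² = 2L + 3 log L`, so
`ψ_L e^{-ψ_L²/2} = √(2L + 3 log L) · e^{-L} L^{-3/2} ≥ e^{-L} / L = 1 / (log λ · log log λ)`
once `L ≥ 1`. Hence the integrand eventually dominates `1 / (λ log λ log log λ)`, the derivative
of `log log log λ`, which tends to infinity; so the integrand is not integrable near `∞`. -/

lemma inv_exp_mul_le_sqrt_mul_exp {L : ℝ} (hL : 1 ≤ L) :
    (exp L * L)⁻¹ ≤ √(2 * L + 3 * log L) * exp (-√(2 * L + 3 * log L) ^ 2 / 2) := by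
  have hL0 : 0 < L := one_pos.trans_le hL
  have hlogL : 0 ≤ log L := log_nonneg hL
  rw [sq_sqrt (by positivity)]
  have hexp : exp (-(2 * L + 3 * log L) / 2) = (exp L)⁻¹ * L ^ (-(3 / 2) : ℝ) := by
    rw [rpow_def_of_pos hL0, ← exp_neg, ← exp_add]
    ring_nf
  calc (exp L * L)⁻¹ = L ^ (1 / 2 : ℝ) * ((exp L)⁻¹ * L ^ (-(3 / 2) : ℝ)) := by
        rw [mul_left_comm, ← rpow_add hL0]
        norm_num [mul_comm, rpow_neg_one]
    _ ≤ √(2 * L + 3 * log L) * exp (-(2 * L + 3 * log L) / 2) := by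
        rw [hexp, ← sqrt_eq_rpow]
        gcongr
        linarith

lemma exp_one_le_log {x : ℝ} (hx : exp (exp 1) ≤ x) : exp 1 ≤ log x :=
  (le_log_iff_exp_le ((exp_pos _).trans_le hx)).2 hx

lemma one_le_log_log {x : ℝ} (hx : exp (exp 1) ≤ x) : 1 ≤ log (log x) :=
  (le_log_iff_exp_le ((exp_pos _).trans_le (exp_one_le_log hx))).2 (exp_one_le_log hx)

lemma hasDerivAt_log_log_log {x : ℝ} (hx : x ≠ 0) (h₁ : log x ≠ 0) (h₂ : log (log x) ≠ 0) :
    HasDerivAt (fun y => log (log (log y))) (x * log x * log (log x))⁻¹ x := by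
  convert ((hasDerivAt_log hx).log h₁).log h₂ using 1
  field_simp

lemma tendsto_log_log_log_atTop : Tendsto (fun x => log (log (log x))) atTop atTop :=
  tendsto_log_atTop.comp (tendsto_log_atTop.comp tendsto_log_atTop)

noncomputable def psiL (x : ℝ) : ℝ := √(2 * log (log x) + 3 * log (log (log x)))

lemma inv_mul_log_mul_log_log_le_psiL {x : ℝ} (hx : exp (exp 1) ≤ x) :
    (x * log x * log (log x))⁻¹ ≤ psiL x * exp (-psiL x ^ 2 / 2) / x := by
  have key := inv_exp_mul_le_sqrt_mul_exp (one_le_log_log hx)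
  rw [exp_log ((exp_pos 1).trans_le (exp_one_le_log hx))] at key
  rw [mul_assoc, mul_inv, inv_mul_eq_div]
  exact div_le_div_of_nonneg_right key ((exp_pos _).trans_le hx).le

theorem psiL_integral_infinite_general (lam₀ : ℝ) :
    ¬ MeasureTheory.IntegrableOn
      (fun lam : ℝ =>
        Real.sqrt (2 * Real.log (Real.log lam) + 3 * Real.log (Real.log (Real.log lam))) *
          Real.exp (-(Real.sqrt (2 * Real.log (Real.log lam) +
            3 * Real.log (Real.log (Real.log lam)))) ^ 2 / 2) / lam)
      (Set.Ici lam₀) := by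
  have hlarge : ∀ᶠ x in atTop, exp (exp 1) ≤ x := eventually_ge_atTop _
  have hpos : ∀ᶠ x in atTop, 0 < x ∧ 0 < log x ∧ 0 < log (log x) := by
    filter_upwards [hlarge] with x hx
    exact ⟨(exp_pos _).trans_le hx, (exp_pos 1).trans_le (exp_one_le_log hx),
      one_pos.trans_le (one_le_log_log hx)⟩
  have hderiv : ∀ᶠ x in atTop,
      HasDerivAt (fun y => log (log (log y))) (x * log x * log (log x))⁻¹ x := by
    filter_upwards [hpos] with x ⟨hx, h₁, h₂⟩
    exact hasDerivAt_log_log_log hx.ne' h₁.ne' h₂.ne'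
  refine not_integrableOn_of_tendsto_norm_atTop_of_deriv_isBigO_filter atTop (Ici_mem_atTop lam₀)
    (hderiv.mono fun x hx => hx.differentiableAt)
    (tendsto_norm_atTop_atTop.comp tendsto_log_log_log_atTop) (IsBigO.of_bound' ?_)
  filter_upwards [hderiv, hpos, hlarge] with x hx ⟨hx₀, h₁, h₂⟩ hxe
  rw [hx.deriv, norm_of_nonneg (by positivity)]
  exact (inv_mul_log_mul_log_log_le_psiL hxe).trans (le_norm_self _)

theorem psiL_integral_infinite (lam₀ : ℝ)
    (h : ∀ x ∈ Set.Ici lam₀, 0 < Real.log (Real.log (Real.log x))) :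
    ¬ MeasureTheory.IntegrableOn
      (fun lam : ℝ =>
        Real.sqrt (2 * Real.log (Real.log lam) + 3 * Real.log (Real.log (Real.log lam))) *
          Real.exp (-(Real.sqrt (2 * Real.log (Real.log lam) +
            3 * Real.log (Real.log (Real.log lam)))) ^ 2 / 2) / lam)
      (Set.Ici lam₀) :=
  psiL_integral_infinite_general lam₀
end

section
/- Let γ > 0, A > 0, S, B ∈ ℝ with S ≥ eγA², B ≥ 0, and suppose γ(e-1)S - (1/2)(e²-1)γ²A² ≤ B. Then γS - γ²A²/2 ≤ (2e-1)B/(e-1)². -/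
theorem sub_half_le_of_mul_le_of_sub_le (c u v B : ℝ) (hc : 1 < c) (huv : c * v ≤ u)
    (h : (c - 1) * u - (c ^ 2 - 1) / 2 * v ≤ B) :
    u - v / 2 ≤ (2 * c - 1) * B / (c - 1) ^ 2 := by
  rw [le_div_iff₀ (pow_pos (sub_pos.mpr hc) 2)]
  have hslack : 0 ≤ c * (c - 1) * (u - c * v) :=
    mul_nonneg (mul_nonneg (by linarith) (by linarith)) (by linarith)
  calc (u - v / 2) * (c - 1) ^ 2
      = (2 * c - 1) * ((c - 1) * u - (c ^ 2 - 1) / 2 * v) - c * (c - 1) * (u - c * v) := by ring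
    _ ≤ (2 * c - 1) * ((c - 1) * u - (c ^ 2 - 1) / 2 * v) := sub_le_self _ hslack
    _ ≤ (2 * c - 1) * B := mul_le_mul_of_nonneg_left h (by linarith)

theorem case_iii_exponent_bound_general (γ A S B : ℝ) (hγ : 0 < γ)
    (hS : S ≥ Real.exp 1 * γ * A ^ 2)
    (h : γ * (Real.exp 1 - 1) * S - (1 / 2) * (Real.exp 1 ^ 2 - 1) * γ ^ 2 * A ^ 2 ≤ B) :
    γ * S - γ ^ 2 * A ^ 2 / 2 ≤ (2 * Real.exp 1 - 1) * B / (Real.exp 1 - 1) ^ 2 := by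
  have hγS : Real.exp 1 * (γ ^ 2 * A ^ 2) ≤ γ * S := by
    linear_combination mul_le_mul_of_nonneg_left hS hγ.le
  exact sub_half_le_of_mul_le_of_sub_le _ _ _ B (Real.one_lt_exp_iff.mpr one_pos) hγS
    (by linear_combination h)

theorem case_iii_exponent_bound (γ A S B : ℝ) (hγ : 0 < γ) (hA : 0 < A)
    (hS : S ≥ Real.exp 1 * γ * A ^ 2) (hB : 0 ≤ B)
    (h : γ * (Real.exp 1 - 1) * S - (1 / 2) * (Real.exp 1 ^ 2 - 1) * γ ^ 2 * A ^ 2 ≤ B) :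
    γ * S - γ ^ 2 * A ^ 2 / 2 ≤ (2 * Real.exp 1 - 1) * B / (Real.exp 1 - 1) ^ 2 :=
  case_iii_exponent_bound_general γ A S B hγ hS h
end
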